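/- Let X be a complex Banach space, A a bounded linear operator on X, 2 < α < 3 real, γ ∈ ℝ and λ a positive integer. If u : {n ∈ ℤ : n ≥ −λ} → X satisfies the homogeneous problem, namely u(i) = 0 for every i with −λ ≤ i ≤ 2 and Δ^α u(n) = A u(n) + γ u(n−λ) for every n ∈ ℕ (Δ^α applied to the restriction of u to ℕ), then u(n) = 0 for all n ≥ −λ. Consequently, for any f : ℕ → X the delayed equation Δ^α u(n) = A u(n) + γ u(n−λ) + f(n) with initial conditions u(i) = 0 for −λ ≤ i ≤ 2 has at most one solution. -/

import Mathlib

/-- The kernel `k^β(j) = Γ(β+j)/(Γ(β)Γ(j+1))`. -/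
noncomputable def kker (β : ℝ) (j : ℕ) : ℝ :=
  Real.Gamma (β + j) / (Real.Gamma β * Real.Gamma (j + 1))

/-- Finite convolution of a scalar sequence with a vector-valued sequence:
`(a*g)(n) = Σ_{j=0}^n a(n−j) • g(j)`. -/
noncomputable def conv {R M : Type*} [Semiring R] [AddCommMonoid M] [Module R M]
    (a : ℕ → R) (g : ℕ → M) (n : ℕ) : M :=
  ∑ j ∈ Finset.range (n + 1), a (n - j) • g j

/-- Forward difference `Δu(n) = u(n+1) − u(n)`. -/
def fdiff {M : Type*} [AddCommGroup M] (u : ℕ → M) (n : ℕ) : M := u (n + 1) - u n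

/-- Riemann–Liouville fractional difference of order `α` (for `2 < α < 3`):
`Δ^α u(n) = Δ³ (k^{3−α} * u)(n)`. -/
noncomputable def fracDiff {M : Type*} [AddCommGroup M] [Module ℝ M]
    (α : ℝ) (u : ℕ → M) (n : ℕ) : M :=
  fdiff (fdiff (fdiff (conv (kker (3 - α)) u))) n


lemma kker_zero {β : ℝ} (hβ : 0 < β) : kker β 0 = 1 := by
  have h := (Real.Gamma_pos_of_pos hβ).ne'
  simp [kker, Real.Gamma_one]
  exact h

lemma conv_eq_zero {M : Type*} [AddCommGroup M] [Module ℝ M]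
    {a : ℕ → ℝ} {g : ℕ → M} {n : ℕ} (h : ∀ j ≤ n, g j = 0) : conv a g n = 0 := by
  apply Finset.sum_eq_zero
  intro j hj
  rw [h j (by simpa [Nat.lt_succ_iff] using hj), smul_zero]

lemma conv_eq_single {M : Type*} [AddCommGroup M] [Module ℝ M]
    {a : ℕ → ℝ} {g : ℕ → M} {n : ℕ} (h : ∀ j < n, g j = 0) :
    conv a g n = a 0 • g n := by
  rw [conv, Finset.sum_eq_single n]
  · simp
  · intro j hj hjn
    rw [h j (by simp [Nat.lt_succ_iff] at hj; omega), smul_zero]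
  · intro hn; exact absurd (Finset.self_mem_range_succ n) hn

lemma fracDiff_sub {M : Type*} [AddCommGroup M] [Module ℝ M]
    (α : ℝ) (u v : ℕ → M) (n : ℕ) :
    fracDiff α (fun m => u m - v m) n = fracDiff α u n - fracDiff α v n := by
  simp only [fracDiff, fdiff, conv, smul_sub, Finset.sum_sub_distrib]
  abel


/-- Theorem 3.8 (uniqueness): any solution of the homogeneous delayed problem
with zero initial data vanishes identically; consequently, for any `f : ℕ → X`
the delayed equation `Δ^α u(n) = A u(n) + γ u(n−lam) + f(n)` with initial
conditions `u(i) = 0` for `−lam ≤ i ≤ 2` has at most one solution. -/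
theorem solution_uniqueness {X : Type*} [NormedAddCommGroup X] [NormedSpace ℂ X]
    (A : X →L[ℂ] X) (α : ℝ) (hα1 : 2 < α) (hα2 : α < 3) (γ : ℝ)
    (lam : ℕ) (hlam : 0 < lam) :
    (∀ u : ℤ → X,
      (∀ i : ℤ, -(lam : ℤ) ≤ i → i ≤ 2 → u i = 0) →
      (∀ n : ℕ, fracDiff α (fun m : ℕ => u (m : ℤ)) n =
        A (u (n : ℤ)) + γ • u ((n : ℤ) - (lam : ℤ))) →
      ∀ n : ℤ, -(lam : ℤ) ≤ n → u n = 0) ∧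
    (∀ f : ℕ → X, ∀ u v : ℤ → X,
      (∀ i : ℤ, -(lam : ℤ) ≤ i → i ≤ 2 → u i = 0) →
      (∀ n : ℕ, fracDiff α (fun m : ℕ => u (m : ℤ)) n =
        A (u (n : ℤ)) + γ • u ((n : ℤ) - (lam : ℤ)) + f n) →
      (∀ i : ℤ, -(lam : ℤ) ≤ i → i ≤ 2 → v i = 0) →
      (∀ n : ℕ, fracDiff α (fun m : ℕ => v (m : ℤ)) n =
        A (v (n : ℤ)) + γ • v ((n : ℤ) - (lam : ℤ)) + f n) →
      ∀ n : ℤ, -(lam : ℤ) ≤ n → u n = v n) := by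
  have hβ : (0:ℝ) < 3 - α := by linarith
  have H1 : (∀ u : ℤ → X,
      (∀ i : ℤ, -(lam : ℤ) ≤ i → i ≤ 2 → u i = 0) →
      (∀ n : ℕ, fracDiff α (fun m : ℕ => u (m : ℤ)) n =
        A (u (n : ℤ)) + γ • u ((n : ℤ) - (lam : ℤ))) →
      ∀ n : ℤ, -(lam : ℤ) ≤ n → u n = 0) := by
    intro u hinit heq
    have key : ∀ m : ℕ, u (m : ℤ) = 0 := by
      intro m
      induction m using Nat.strong_induction_on with
      | _ m IH =>
        by_cases hm : m ≤ 2
        · exact hinit m (by omega) (by exact_mod_cast hm)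
        · obtain ⟨n, rfl⟩ : ∃ n, m = n + 3 := ⟨m - 3, by omega⟩
          have h0 : ∀ j : ℕ, j < n + 3 → u (j:ℤ) = 0 := fun j hj => IH j hj
          have hc0 : ∀ p ≤ n + 2, conv (kker (3-α)) (fun j:ℕ => u (j:ℤ)) p = 0 := by
            intro p hp
            exact conv_eq_zero (fun j hj => h0 j (by omega))
          have hc3 : conv (kker (3-α)) (fun j:ℕ => u (j:ℤ)) (n+3)
              = kker (3-α) 0 • u ((n+3:ℕ):ℤ) :=
            conv_eq_single (fun j hj => h0 j hj)
          have hL : fracDiff α (fun j:ℕ => u (j:ℤ)) n = u ((n+3:ℕ):ℤ) := by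
            simp only [fracDiff, fdiff]
            rw [show n+1+1+1 = n+3 by ring, show n+1+1 = n+2 by ring]
            rw [hc3, hc0 (n+2) le_rfl, hc0 (n+1) (by omega), hc0 n (by omega),
              kker_zero hβ, one_smul]
            abel
          have hrhs1 : u (n:ℤ) = 0 := h0 n (by omega)
          have hrhs2 : u ((n:ℤ) - (lam:ℤ)) = 0 := by
            rcases le_or_gt ((n:ℤ) - (lam:ℤ)) 2 with h | h
            · exact hinit _ (by omega) h
            · lift ((n:ℤ) - (lam:ℤ)) to ℕ using (by omega) with k hk
              exact h0 k (by omega)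
          have := heq n
          rw [hL, hrhs1, hrhs2] at this
          simpa using this
    intro n hn
    rcases le_or_gt n 2 with h | h
    · exact hinit n hn h
    · lift n to ℕ using (by omega) with m hm
      exact key m
  refine ⟨H1, ?_⟩
  intro f u v hu1 hu2 hv1 hv2 n hn
  have h := H1 (fun i => u i - v i)
    (fun i h1 h2 => by show u i - v i = 0; rw [hu1 i h1 h2, hv1 i h1 h2, sub_self])
    (fun n => by
      beta_reduce
      rw [fracDiff_sub α (fun m:ℕ => u (m:ℤ)) (fun m:ℕ => v (m:ℤ)) n, hu2 n, hv2 n,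
        map_sub, smul_sub]
      abel)
    n hn
  exact sub_eq_zero.mp h
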